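/- Let Q be as in the context. Then there exist real numbers a < b such that ψ(a,b) = 0 and φ(a,b) ≥ 0. In other words, the set {a ∈ ℝ : φ(a, b(a)) ≥ 0}, where b(a) denotes the unique b > a with ψ(a,b) = 0, is nonempty. -/

import Mathlib

open MeasureTheory intervalIntegral

/-- `φ(a,b) = ∫₀¹ Q'((1−t)b + t·a)/√(t(1−t)) dt`. -/
noncomputable def phi (Q : Polynomial ℝ) (a b : ℝ) : ℝ :=
  ∫ t in (0:ℝ)..1, Q.derivative.eval ((1 - t) * b + t * a) / Real.sqrt (t * (1 - t))

/-- `ψ(a,b) = (b−a)·∫₀¹ Q'((1−t)b + t·a)·√((1−t)/t) dt − 2π`. -/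
noncomputable def psi (Q : Polynomial ℝ) (a b : ℝ) : ℝ :=
  (b - a) * (∫ t in (0:ℝ)..1, Q.derivative.eval ((1 - t) * b + t * a) * Real.sqrt ((1 - t) / t))
    - 2 * Real.pi

/-!
Since `Q'` has odd degree `2m - 1 ≥ 1` and positive leading coefficient, `Q' ≥ 1` on some
half-line `[a, ∞)`. Then `φ(a, b) ≥ 0` for every `b > a`, and `b ↦ ψ(a, b)` is continuous with
`ψ(a, a) = -2π`. As `√((1 - t)/t) ≥ 1 - t` on `(0, 1]`, the integral in `ψ(a, b)` is at least
`∫₀¹ (1 - t) dt = 1/2`, so `ψ(a, a + 4π) ≥ 0`, and the intermediate value theorem gives `b`.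
-/

open Filter Set Polynomial

theorem Polynomial.tendsto_eval_derivative_atTop {Q : ℝ[X]} (hdeg : 2 ≤ Q.natDegree)
    (hlead : 0 < Q.leadingCoeff) :
    Tendsto (fun x => Q.derivative.eval x) atTop atTop := by
  refine Q.derivative.tendsto_atTop_of_leadingCoeff_nonneg ?_ ?_
  · rw [← natDegree_pos_iff_degree_pos, natDegree_derivative]
    omega
  · rw [leadingCoeff_derivative]
    have : (0 : ℝ) < Q.natDegree := by exact_mod_cast (by omega : 0 < Q.natDegree)
    positivity

theorem continuous_intervalIntegral_mul_of_intervalIntegrable {X : Type*} [TopologicalSpace X]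
    [FirstCountableTopology X] [WeaklyLocallyCompactSpace X] {F : X → ℝ → ℝ}
    (hF : Continuous (Function.uncurry F)) {w : ℝ → ℝ} {a b : ℝ}
    (hw : IntervalIntegrable w volume a b) :
    Continuous fun x => ∫ t in a..b, F x t * w t := by
  refine continuous_iff_continuousAt.2 fun x₀ => ?_
  obtain ⟨K, hK, hKx₀⟩ := exists_compact_mem_nhds x₀
  obtain ⟨M, hM⟩ := (hK.prod isCompact_uIcc).exists_bound_of_continuousOn hF.continuousOn
  refine continuousAt_of_dominated_interval (bound := fun t => M * ‖w t‖) ?_ ?_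
    (hw.norm.const_mul M) ?_
  · exact Eventually.of_forall fun x =>
      (hF.comp (Continuous.prodMk_right x)).aestronglyMeasurable.mul hw.def'.aestronglyMeasurable
  · filter_upwards [hKx₀] with x hx
    refine ae_of_all _ fun t ht => ?_
    rw [norm_mul]
    exact mul_le_mul_of_nonneg_right (hM (x, t) ⟨hx, uIoc_subset_uIcc ht⟩) (norm_nonneg _)
  · exact ae_of_all _ fun t _ =>
      ((hF.comp (Continuous.prodMk_left t)).mul continuous_const).continuousAt

section Weight

variable {t : ℝ}

theorem one_sub_le_sqrt_one_sub_div (ht₀ : 0 < t) (ht₁ : t ≤ 1) :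
    1 - t ≤ √((1 - t) / t) := by
  refine Real.le_sqrt_of_sq_le ?_
  rw [le_div_iff₀ ht₀]
  nlinarith

theorem sqrt_one_sub_div_le_rpow (ht₀ : 0 < t) :
    √((1 - t) / t) ≤ t ^ (-(1 / 2) : ℝ) := by
  rw [Real.rpow_neg ht₀.le, ← Real.sqrt_eq_rpow, ← Real.sqrt_inv]
  refine Real.sqrt_le_sqrt ?_
  rw [div_le_iff₀ ht₀, inv_mul_cancel₀ ht₀.ne']
  linarith

theorem intervalIntegrable_sqrt_one_sub_div :
    IntervalIntegrable (fun t : ℝ => √((1 - t) / t)) volume 0 1 := by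
  refine (intervalIntegrable_rpow' (r := -(1 / 2)) (by norm_num)).mono_fun
    (by fun_prop : Measurable fun t : ℝ => √((1 - t) / t)).aestronglyMeasurable ?_
  rw [uIoc_of_le zero_le_one]
  refine (ae_restrict_iff' measurableSet_Ioc).2 (ae_of_all _ fun t ht => ?_)
  dsimp only
  rw [Real.norm_of_nonneg (Real.sqrt_nonneg _),
    Real.norm_of_nonneg (Real.rpow_nonneg ht.1.le _)]
  exact sqrt_one_sub_div_le_rpow ht.1

end Weight

section PhiPsi

variable (Q : ℝ[X]) {a b : ℝ}

theorem one_sub_mul_add_mul_mem_Icc {t : ℝ} (hab : a ≤ b) (ht : t ∈ Icc (0 : ℝ) 1) :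
    (1 - t) * b + t * a ∈ Icc a b := by
  constructor <;> nlinarith [ht.1, ht.2]

theorem continuous_psi (a : ℝ) : Continuous (psi Q a) := by
  have hF : Continuous
      (Function.uncurry fun b t : ℝ => Q.derivative.eval ((1 - t) * b + t * a)) :=
    Q.derivative.continuous.comp (by fun_prop)
  unfold psi
  exact ((continuous_id.sub continuous_const).mul
    (continuous_intervalIntegral_mul_of_intervalIntegrable hF
      intervalIntegrable_sqrt_one_sub_div)).sub continuous_const

theorem psi_self (a : ℝ) : psi Q a a = -(2 * Real.pi) := by
  simp [psi]

theorem le_psi_of_le_eval_derivative {L : ℝ} (hL : 0 ≤ L) (hab : a ≤ b)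
    (hQ : ∀ x ∈ Icc a b, L ≤ Q.derivative.eval x) :
    (b - a) * (L / 2) - 2 * Real.pi ≤ psi Q a b := by
  have hlinear : (∫ t in (0:ℝ)..1, L * (1 - t)) = L / 2 := by
    rw [intervalIntegral.integral_const_mul, integral_comp_sub_left (fun x => x)]
    norm_num
    ring
  have hmono : (∫ t in (0:ℝ)..1, L * (1 - t)) ≤
      ∫ t in (0:ℝ)..1, Q.derivative.eval ((1 - t) * b + t * a) * √((1 - t) / t) := by
    refine integral_mono_on_of_le_Ioo zero_le_one
      ((by fun_prop : Continuous _).intervalIntegrable _ _) ?_ fun t ht => ?_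
    · exact intervalIntegrable_sqrt_one_sub_div.continuousOn_mul
        (Q.derivative.continuous.comp (by fun_prop)).continuousOn
    have hx := hQ _ (one_sub_mul_add_mul_mem_Icc hab (Ioo_subset_Icc_self ht))
    exact mul_le_mul hx (one_sub_le_sqrt_one_sub_div ht.1 ht.2.le) (by linarith [ht.2])
      (hL.trans hx)
  unfold psi
  rw [← hlinear]
  gcongr

theorem phi_nonneg (hab : a ≤ b) (hQ : ∀ x ∈ Icc a b, 0 ≤ Q.derivative.eval x) :
    0 ≤ phi Q a b :=
  integral_nonneg zero_le_one fun _ ht =>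
    div_nonneg (hQ _ (one_sub_mul_add_mul_mem_Icc hab ht)) (Real.sqrt_nonneg _)

theorem exists_psi_eq_zero_of_one_le_eval_derivative
    (hQ : ∀ x, a ≤ x → 1 ≤ Q.derivative.eval x) :
    ∃ b, a < b ∧ psi Q a b = 0 := by
  have hb : a ≤ a + 4 * Real.pi := by linarith [Real.pi_pos]
  have hpos : 0 ≤ psi Q a (a + 4 * Real.pi) := by
    have := le_psi_of_le_eval_derivative Q zero_le_one hb fun x hx => hQ x hx.1
    linarith
  have hzero : (0 : ℝ) ∈ Ioc (psi Q a a) (psi Q a (a + 4 * Real.pi)) := by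
    rw [psi_self]
    exact ⟨by linarith [Real.pi_pos], hpos⟩
  obtain ⟨b, hb, hψ⟩ := intermediate_value_Ioc hb (continuous_psi Q a).continuousOn hzero
  exact ⟨b, hb.1, hψ⟩

end PhiPsi

theorem exists_psi_eq_zero_phi_nonneg_general (Q : Polynomial ℝ) (m : ℕ) (hm : 1 ≤ m)
    (hdeg : Q.natDegree = 2 * m) (hlead : 0 < Q.leadingCoeff) :
    ∃ a b : ℝ, a < b ∧ psi Q a b = 0 ∧ 0 ≤ phi Q a b := by
  obtain ⟨a, ha⟩ := eventually_atTop.1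
    ((Q.tendsto_eval_derivative_atTop (by omega) hlead).eventually_ge_atTop 1)
  obtain ⟨b, hab, hψ⟩ := exists_psi_eq_zero_of_one_le_eval_derivative Q ha
  exact ⟨a, b, hab, hψ, phi_nonneg Q hab.le fun x hx => zero_le_one.trans (ha x hx.1)⟩

/-- There exist `a < b` with `ψ(a,b) = 0` and `φ(a,b) ≥ 0`. -/
theorem exists_psi_eq_zero_phi_nonneg (Q : Polynomial ℝ) (m : ℕ) (hm : 1 ≤ m)
    (hdeg : Q.natDegree = 2 * m) (hlead : 0 < Q.leadingCoeff)
    (hconv : ∀ x : ℝ, 0 ≤ Q.derivative.derivative.eval x) :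
    ∃ a b : ℝ, a < b ∧ psi Q a b = 0 ∧ 0 ≤ phi Q a b :=
  exists_psi_eq_zero_phi_nonneg_general Q m hm hdeg hlead
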